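/- Let a > 0 and j ∈ ℕ. Then for almost every u > 0, C_a(u, 1+2j) = − F₊(𝟙_{(0,a]}(t) · t^(2j))(u), where 𝟙_{(0,a]}(t) · t^(2j) denotes the function equal to t^(2j) for 0 < t ≤ a and 0 for t > a. -/

import Mathlib

/-!
Write `cosShift k x = cos (x - kπ/2)`, so that `cosShift (k+1)` is an antiderivative of
`cosShift k`. For `Re w < 0`, integrating `∫_a^∞ cos(ct) t^(w-1) dt` by parts `n` times gives
entire boundary terms at `a` plus `∫_a^∞ cosShift n (ct) t^(w-1-n) dt`, which is holomorphic on
`Re w < n` (a Mellin transform); by the identity theorem this is the continuation `C_a`.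
At `w = 2j+1` the factor `w - 1 - 2j` produced by the `2j`-th integration by parts vanishes, and
the surviving boundary terms are, up to sign, those of the same integrations by parts applied to
`∫_0^a cos(ct) t^(2j) dt`, whose boundary terms at `0` vanish (the last one because `2j` is even).
-/

open MeasureTheory Complex Set Real

noncomputable section

/-- The measure `dt` on `(0,∞)`. -/
def mu : Measure ℝ := volume.restrict (Ioi 0)

/-- `K = L²((0,∞), dt)`. -/
abbrev Kspace := Lp ℂ 2 mu

/-- `Fp` is the Fourier cosine transform `F₊`: a unitary involution of `K` given, in the
`L²` sense, by `F₊(f)(t) = 2∫₀^∞ cos(2πtu) f(u) du`. -/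
def IsCosineTransform (Fp : Kspace ≃ₗᵢ[ℂ] Kspace) : Prop :=
  (∀ f : Kspace, Fp (Fp f) = f) ∧
  ∀ f : Kspace, Integrable (⇑f) mu →
    ∀ᵐ t ∂mu, (Fp f : ℝ → ℂ) t = 2 * ∫ u, (Real.cos (2 * π * t * u) : ℂ) * f u ∂mu

/-- `f ∈ K_{a,b}`: `f` vanishes a.e. on `(0,a)` and `F₊(f)` vanishes a.e. on `(0,b)`. -/
def MemKab (Fp : Kspace ≃ₗᵢ[ℂ] Kspace) (a b : ℝ) (f : Kspace) : Prop :=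
  (∀ᵐ t ∂mu, t < a → (f : ℝ → ℂ) t = 0) ∧
  (∀ᵐ t ∂mu, t < b → (Fp f : ℝ → ℂ) t = 0)

/-- `C t` is, for each `t > 0`, the entire extension of
`w ↦ 2∫_a^∞ cos(2πut) t^(w−1) dt` (defined for `Re(w) < 0`). -/
def IsCaExtension (a : ℝ) (C : ℝ → ℂ → ℂ) : Prop :=
  ∀ u : ℝ, 0 < u → Differentiable ℂ (C u) ∧
    ∀ w : ℂ, w.re < 0 →
      C u w = 2 * ∫ t in Ioi a, (Real.cos (2 * π * u * t) : ℂ) * (t : ℂ) ^ (w - 1)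

open Filter Asymptotics Topology

theorem eq_sum_range_add_prod_mul_of_recurrence {R : Type*} [CommSemiring R]
    {x b q : ℕ → R} {n : ℕ} (h : ∀ k < n, x k = b k + q k * x (k + 1)) :
    x 0 = ∑ k ∈ Finset.range n, (∏ i ∈ Finset.range k, q i) * b k
      + (∏ i ∈ Finset.range n, q i) * x n := by
  induction n with
  | zero => simp
  | succ n ih =>
    rw [ih fun k hk => h k (by omega), h n n.lt_succ_self, Finset.sum_range_succ,
      Finset.prod_range_succ]
    ring

namespace CosineTail

def cosShift (n : ℕ) (x : ℝ) : ℝ := Real.cos (x - n * (π / 2))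

lemma cosShift_zero : cosShift 0 = Real.cos := by
  funext x; simp [cosShift]

lemma cosShift_two_mul_add_one_zero (j : ℕ) : cosShift (2 * j + 1) 0 = 0 := by
  rw [cosShift, zero_sub, Real.cos_neg, Real.cos_eq_zero_iff]
  exact ⟨j, by push_cast; ring⟩

@[fun_prop]
lemma continuous_cosShift (n : ℕ) : Continuous (cosShift n) := by
  unfold cosShift; fun_prop

lemma hasDerivAt_cosShift_succ (n : ℕ) (x : ℝ) :
    HasDerivAt (cosShift (n + 1)) (cosShift n x) x := by
  refine ((hasDerivAt_id x).sub_const ((n + 1 : ℕ) * (π / 2))).cos.congr_deriv ?_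
  rw [cosShift, id, mul_one, Nat.cast_succ,
    show x - (n + 1) * (π / 2) = x - n * (π / 2) - π / 2 by ring, Real.sin_sub_pi_div_two, neg_neg]

lemma norm_cosShift_mul_le (n : ℕ) (x : ℝ) (z : ℂ) : ‖(cosShift n x : ℂ) * z‖ ≤ ‖z‖ := by
  rw [norm_mul, Complex.norm_real]
  exact mul_le_of_le_one_left (norm_nonneg z) (Real.abs_cos_le_one _)

lemma hasDerivAt_cosShift_mul (c : ℝ) (n : ℕ) {g : ℝ → ℂ} {g' : ℂ} {t : ℝ}
    (hg : HasDerivAt g g' t) :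
    HasDerivAt (fun s => (cosShift (n + 1) (c * s) : ℂ) * g s)
      (c * cosShift n (c * t) * g t + cosShift (n + 1) (c * t) * g') t := by
  have h := (((hasDerivAt_cosShift_succ n (c * t)).comp t
    ((hasDerivAt_id t).const_mul c)).ofReal_comp).mul hg
  refine h.congr_deriv ?_
  simp only [Function.comp_apply, mul_one]
  push_cast
  ring

lemma hasDerivAt_ofReal_cpow {t : ℝ} (ht : 0 < t) (s : ℂ) :
    HasDerivAt (fun t : ℝ => (t : ℂ) ^ s) (s * (t : ℂ) ^ (s - 1)) t :=
  (hasStrictDerivAt_cpow_const (ofReal_mem_slitPlane.mpr ht)).hasDerivAt.comp_ofReal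

def tailIntegral (a c : ℝ) (n : ℕ) (w : ℂ) : ℂ :=
  ∫ t in Ioi a, (cosShift n (c * t) : ℂ) * (t : ℂ) ^ (w - 1 - n)

lemma integrableOn_cosShift_mul_cpow {a : ℝ} (ha : 0 < a) (c : ℝ) (n : ℕ) {s : ℂ}
    (hs : s.re < -1) :
    IntegrableOn (fun t : ℝ => (cosShift n (c * t) : ℂ) * (t : ℂ) ^ s) (Ioi a) := by
  refine (integrableOn_Ioi_norm_cpow_of_lt hs ha).mono' ?_
    (ae_of_all _ fun t => norm_cosShift_mul_le n _ _)
  refine ContinuousOn.aestronglyMeasurable (fun t ht => ?_) measurableSet_Ioi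
  exact ((continuous_ofReal.comp ((continuous_cosShift n).comp (continuous_const_mul c))
    ).continuousAt.mul (hasDerivAt_ofReal_cpow (ha.trans ht) s).continuousAt).continuousWithinAt

lemma tailIntegral_eq_mellin {a : ℝ} (ha : 0 ≤ a) (c : ℝ) (n : ℕ) (w : ℂ) :
    tailIntegral a c n w = mellin ((Ioi a).indicator fun t => (cosShift n (c * t) : ℂ)) (w - n) := by
  rw [mellin, ← indicator_smul (Ioi a) (fun t : ℝ => (t : ℂ) ^ (w - n - 1)),
    setIntegral_indicator measurableSet_Ioi, inter_eq_right.mpr (Ioi_subset_Ioi ha), tailIntegral]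
  refine setIntegral_congr_fun measurableSet_Ioi fun t _ => ?_
  rw [smul_eq_mul, mul_comm, sub_right_comm w 1]

lemma differentiableAt_tailIntegral {a : ℝ} (ha : 0 < a) (c : ℝ) (n : ℕ) {w : ℂ}
    (hw : w.re < n) : DifferentiableAt ℂ (tailIntegral a c n) w := by
  set f : ℝ → ℂ := (Ioi a).indicator fun t => (cosShift n (c * t) : ℂ)
  have hf_bdd : ∀ t, ‖f t‖ ≤ 1 := fun t => by
    by_cases ht : t ∈ Ioi a
    · simpa [f, indicator_of_mem ht] using norm_cosShift_mul_le n (c * t) 1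
    · simp [f, indicator_of_notMem ht]
  have hfc : LocallyIntegrableOn f (Ioi 0) :=
    (((continuous_ofReal.comp ((continuous_cosShift n).comp
      (continuous_const_mul c))).locallyIntegrable).indicator measurableSet_Ioi).locallyIntegrableOn _
  have hf_top : f =O[atTop] (· ^ (-(0 : ℝ))) :=
    IsBigO.of_bound 1 (Eventually.of_forall fun t => by simpa using hf_bdd t)
  have hf_bot : f =O[𝓝[>] 0] (· ^ (-(w.re - n - 1))) := by
    refine IsBigO.of_bound 0 ?_
    filter_upwards [Ioo_mem_nhdsGT ha] with t ht
    simp only [f]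
    rw [indicator_of_notMem (show t ∉ Ioi a from not_lt.mpr ht.2.le), norm_zero, zero_mul]
  have hmellin := mellin_differentiableAt_of_isBigO_rpow (s := w - n) hfc hf_top
    (by simpa using hw) hf_bot (by simp)
  rw [show tailIntegral a c n = fun w => mellin f (w - n) from
    funext (tailIntegral_eq_mellin ha.le c n)]
  exact (hmellin.comp w (differentiableAt_id.sub_const (n : ℂ)) :)

def boundaryTerm (a c : ℝ) (n : ℕ) (w : ℂ) : ℂ :=
  -((cosShift (n + 1) (c * a) : ℂ) * ((a : ℂ) ^ (w - 1 - n) / c))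

def ibpCoeff (c : ℝ) (n : ℕ) (w : ℂ) : ℂ := -((w - 1 - n) / c)

lemma tailIntegral_eq_boundaryTerm_add {a c : ℝ} (ha : 0 < a) (hc : c ≠ 0) {n : ℕ} {w : ℂ}
    (hw : w.re < n) :
    tailIntegral a c n w = boundaryTerm a c n w + ibpCoeff c n w * tailIntegral a c (n + 1) w := by
  set s : ℂ := w - 1 - n
  set P : ℝ → ℂ := fun t => (cosShift (n + 1) (c * t) : ℂ) * ((t : ℂ) ^ s / c)
  set F : ℝ → ℂ := fun t => (cosShift n (c * t) : ℂ) * (t : ℂ) ^ s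
  set G : ℝ → ℂ := fun t => (cosShift (n + 1) (c * t) : ℂ) * (t : ℂ) ^ (w - 1 - (n + 1 : ℕ))
  have hc' : (c : ℂ) ≠ 0 := ofReal_ne_zero.mpr hc
  have hderiv : ∀ t ∈ Ici a, HasDerivAt P (F t + s / c * G t) t := fun t ht =>
    (hasDerivAt_cosShift_mul c n ((hasDerivAt_ofReal_cpow (ha.trans_le ht) s).div_const (c : ℂ))
      ).congr_deriv (by
        simp only [F, G, s]
        push_cast
        rw [show w - 1 - (n + 1) = w - 1 - n - 1 by ring]
        field_simp)
  have hF : IntegrableOn F (Ioi a) :=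
    integrableOn_cosShift_mul_cpow ha c n (by simp [s]; linarith)
  have hG : IntegrableOn G (Ioi a) :=
    integrableOn_cosShift_mul_cpow ha c (n + 1) (by simp; linarith)
  have hlim : Tendsto P atTop (𝓝 0) := by
    have hs : s.re < 0 := by simp [s]; linarith
    have hdecay := (tendsto_rpow_neg_atTop (neg_pos.mpr hs)).div_const ‖(c : ℂ)‖
    simp only [neg_neg, zero_div] at hdecay
    refine squeeze_zero_norm' ?_ hdecay
    filter_upwards [eventually_gt_atTop 0] with t ht
    rw [← norm_cpow_eq_rpow_re_of_pos ht, ← norm_div]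
    exact norm_cosShift_mul_le _ _ _
  have h := integral_Ioi_of_hasDerivAt_of_tendsto' hderiv (hF.add (hG.const_mul _)) hlim
  rw [integral_add hF (hG.const_mul _), integral_const_mul] at h
  change ∫ t in Ioi a, F t = -P a + -(s / c) * ∫ t in Ioi a, G t
  linear_combination h

def tailContinuation (a c : ℝ) (n : ℕ) (w : ℂ) : ℂ :=
  ∑ k ∈ Finset.range n, (∏ i ∈ Finset.range k, ibpCoeff c i w) * boundaryTerm a c k w
    + (∏ i ∈ Finset.range n, ibpCoeff c i w) * tailIntegral a c n w

lemma differentiableOn_tailContinuation {a : ℝ} (ha : 0 < a) (c : ℝ) (n : ℕ) :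
    DifferentiableOn ℂ (tailContinuation a c n) {w | w.re < n} := by
  intro w hw
  have hJ := differentiableAt_tailIntegral ha c n hw
  have ha' : (a : ℂ) ≠ 0 := ofReal_ne_zero.mpr ha.ne'
  refine DifferentiableAt.differentiableWithinAt ?_
  unfold tailContinuation boundaryTerm ibpCoeff
  fun_prop (disch := exact Or.inl ha')

lemma tailContinuation_eq_tailIntegral {a c : ℝ} (ha : 0 < a) (hc : c ≠ 0) (n : ℕ) {w : ℂ}
    (hw : w.re < 0) : tailContinuation a c n w = tailIntegral a c 0 w :=
  (eq_sum_range_add_prod_mul_of_recurrence (x := fun k => tailIntegral a c k w)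
    (b := fun k => boundaryTerm a c k w) (q := fun k => ibpCoeff c k w) fun k _ =>
    tailIntegral_eq_boundaryTerm_add ha hc (hw.trans_le (Nat.cast_nonneg k))).symm

def headIntegral (a c : ℝ) (j k : ℕ) : ℂ :=
  ∫ t in Ioc 0 a, (cosShift k (c * t) : ℂ) * (t : ℂ) ^ (2 * j - k)

lemma neg_headIntegral_eq_boundaryTerm_add {a c : ℝ} (ha : 0 ≤ a) (hc : c ≠ 0) {j k : ℕ}
    (hk : k ≤ 2 * j) :
    -headIntegral a c j k
      = boundaryTerm a c k (2 * j + 1) + ibpCoeff c k (2 * j + 1) * -headIntegral a c j (k + 1) := by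
  set m := 2 * j - k with hm
  have hmc : (2 * j + 1 : ℂ) - 1 - k = (m : ℂ) := by
    rw [hm, Nat.cast_sub hk]; push_cast; ring
  set P : ℝ → ℂ := fun t => (cosShift (k + 1) (c * t) : ℂ) * ((t : ℂ) ^ m / c)
  set F : ℝ → ℂ := fun t => (cosShift k (c * t) : ℂ) * (t : ℂ) ^ m
  set G : ℝ → ℂ := fun t => (cosShift (k + 1) (c * t) : ℂ) * (t : ℂ) ^ (2 * j - (k + 1))
  have hc' : (c : ℂ) ≠ 0 := ofReal_ne_zero.mpr hc
  have hderiv : ∀ t, HasDerivAt P (F t + m / c * G t) t := fun t =>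
    (hasDerivAt_cosShift_mul c k (((hasDerivAt_pow m (t : ℂ)).comp_ofReal).div_const (c : ℂ))
      ).congr_deriv (by
        simp only [F, G, show 2 * j - (k + 1) = m - 1 by omega]
        field_simp)
  -- at `t = 0` either the power or, when `k = 2j`, the sine `cosShift (2j+1)` vanishes
  have hP0 : P 0 = 0 := by
    rcases Nat.eq_zero_or_pos m with hm0 | hm0
    · obtain rfl : k = 2 * j := by omega
      simp [P, cosShift_two_mul_add_one_zero]
    · simp [P, zero_pow hm0.ne']
  have hFc : Continuous F := by fun_prop
  have hGc : Continuous G := by fun_prop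
  have h := intervalIntegral.integral_eq_sub_of_hasDerivAt (fun t _ => hderiv t)
    ((hFc.add (continuous_const.mul hGc)).intervalIntegrable 0 a)
  rw [intervalIntegral.integral_of_le ha, integral_add hFc.integrableOn_Ioc
    (hGc.integrableOn_Ioc.const_mul _), integral_const_mul, hP0, sub_zero] at h
  change -∫ t in Ioc 0 a, F t
    = boundaryTerm a c k (2 * j + 1) + -((2 * j + 1 - 1 - k) / c) * -∫ t in Ioc 0 a, G t
  rw [boundaryTerm, hmc, cpow_natCast]
  linear_combination -h

lemma tailContinuation_two_mul_add_one {a c : ℝ} (ha : 0 < a) (hc : c ≠ 0) (j : ℕ) :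
    tailContinuation a c (2 * j + 2) (2 * j + 1) = -headIntegral a c j 0 := by
  have hq : ∏ i ∈ Finset.range (2 * j + 1), ibpCoeff c i (2 * j + 1) = 0 :=
    Finset.prod_eq_zero (i := 2 * j) (by simp) (by simp [ibpCoeff])
  rw [eq_sum_range_add_prod_mul_of_recurrence (n := 2 * j + 1)
    (x := fun k => -headIntegral a c j k) (b := fun k => boundaryTerm a c k (2 * j + 1))
    (q := fun k => ibpCoeff c k (2 * j + 1))
    fun k hk => neg_headIntegral_eq_boundaryTerm_add ha.le hc (by omega),
    tailContinuation, Finset.sum_range_succ _ (2 * j + 1), Finset.prod_range_succ _ (2 * j + 1), hq]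
  simp

end CosineTail

open CosineTail

theorem IsCaExtension.apply_two_mul_add_one {a : ℝ} {C : ℝ → ℂ → ℂ} (hC : IsCaExtension a C)
    (ha : 0 < a) (j : ℕ) {u : ℝ} (hu : 0 < u) :
    C u (2 * j + 1) = -(2 * ∫ t in Ioc 0 a, (Real.cos (2 * π * u * t) : ℂ) * (t : ℂ) ^ (2 * j)) := by
  have hc : 2 * π * u ≠ 0 := by positivity
  set U : Set ℂ := {w | w.re < (2 * j + 2 : ℕ)}
  have hU : IsOpen U := isOpen_lt continuous_re continuous_const
  have hCU : AnalyticOnNhd ℂ (C u) U := (hC u hu).1.differentiableOn.analyticOnNhd hU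
  have hTU : AnalyticOnNhd ℂ (fun w => 2 * tailContinuation a (2 * π * u) (2 * j + 2) w) U :=
    ((differentiableOn_tailContinuation ha _ _).const_mul 2).analyticOnNhd hU
  have hagree : C u =ᶠ[𝓝 (-1)] fun w => 2 * tailContinuation a (2 * π * u) (2 * j + 2) w := by
    filter_upwards [(isOpen_lt continuous_re continuous_const).mem_nhds
      (show (-1 : ℂ).re < 0 by norm_num)] with w hw
    rw [(hC u hu).2 w hw, tailContinuation_eq_tailIntegral ha hc _ hw, tailIntegral, cosShift_zero,
      Nat.cast_zero, sub_zero]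
  rw [hCU.eqOn_of_preconnected_of_eventuallyEq hTU (convex_halfSpace_re_lt _).isPreconnected
      (by simp [U]; linarith) hagree (by simp [U])]
  dsimp only
  rw [tailContinuation_two_mul_add_one ha hc, headIntegral, cosShift_zero, Nat.sub_zero,
    mul_neg]

/-- let `a > 0` and `j ∈ ℕ`. For almost every `u > 0`,
`C_a(u, 1+2j) = − F₊(𝟙_{(0,a]}(t) t^(2j))(u)`. -/
theorem statement9
    (Fp : Kspace ≃ₗᵢ[ℂ] Kspace) (hFp : IsCosineTransform Fp)
    (a : ℝ) (ha : 0 < a) (C : ℝ → ℂ → ℂ) (hC : IsCaExtension a C) (j : ℕ)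
    (G : Kspace)
    (hG : (G : ℝ → ℂ) =ᵐ[mu] fun t : ℝ => if t ∈ Ioc (0:ℝ) a then (t : ℂ) ^ (2 * j) else 0) :
    ∀ᵐ u ∂mu, C u (2 * j + 1) = -(Fp G : ℝ → ℂ) u := by
  have hG' : (G : ℝ → ℂ) =ᵐ[mu] (Ioc 0 a).indicator fun t => (t : ℂ) ^ (2 * j) := by
    filter_upwards [hG] with t ht
    rw [ht, indicator_apply]
  have hGint : Integrable G mu :=
    (((integrable_indicator_iff measurableSet_Ioc).2
      (continuous_ofReal.pow _).integrableOn_Ioc).restrict).congr hG'.symm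
  have hcos : ∀ u, ∫ v, (Real.cos (2 * π * u * v) : ℂ) * G v ∂mu
      = ∫ t in Ioc 0 a, (Real.cos (2 * π * u * t) : ℂ) * (t : ℂ) ^ (2 * j) := fun u => by
    rw [integral_congr_ae (g := (Ioc 0 a).indicator fun t =>
        (Real.cos (2 * π * u * t) : ℂ) * (t : ℂ) ^ (2 * j))
        (hG'.mono fun v hv => by rw [hv, indicator_mul_right]), mu,
      setIntegral_indicator measurableSet_Ioc, inter_eq_right.mpr Ioc_subset_Ioi_self]
  filter_upwards [hFp.2 G hGint, ae_restrict_mem measurableSet_Ioi] with u hFu hu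
  rw [hFu, hcos, hC.apply_two_mul_add_one ha j hu]
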